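/- arXiv:1403.2165 — 7 statements merged into one kernel-verified Lean document; each statement's English description precedes it below -/
import Mathlib

section
/- For every n ≥ 1, the following polynomial identity holds in ℤ[q,x,y]: Σ_{σ∈S_n} q^{inv(σ)} x^{rmin(σ)} y^{lmin(σ)} = Σ_{σ∈S_n} q^{sor(σ)} x^{cyc(σ)} y^{lmic1(σ)} = xy · ∏_{r=2}^{n} (x + [r]_q + y·q^{r−1} − 1 − q^{r−1}). -/
open scoped Classical

namespace SortIdx

variable {n : ℕ}

noncomputable section

/-- The inversion number `inv σ := #{(i,j) : i < j ∧ σ i > σ j}`. -/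
def inv (σ : Equiv.Perm (Fin n)) : ℕ :=
  (Finset.univ.filter (fun p : Fin n × Fin n => p.1 < p.2 ∧ σ p.2 < σ p.1)).card

/-- The inversion set `Inv σ := {(i,j) : i < j ∧ σ i > σ j}`. -/
def InvSet (σ : Equiv.Perm (Fin n)) : Finset (Fin n × Fin n) :=
  Finset.univ.filter (fun p : Fin n × Fin n => p.1 < p.2 ∧ σ p.2 < σ p.1)

/-- Right-to-left minimum letters. -/
def RmilSet (σ : Equiv.Perm (Fin n)) : Finset (Fin n) :=
  (Finset.univ.filter (fun i => ∀ j, i < j → σ i < σ j)).image σ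

/-- The number of right-to-left minima. -/
def rmin (σ : Equiv.Perm (Fin n)) : ℕ := (RmilSet σ).card

/-- Right-to-left minimum places. -/
def RmipSet (σ : Equiv.Perm (Fin n)) : Finset (Fin n) :=
  Finset.univ.filter (fun i => ∀ j, i < j → σ i < σ j)

/-- Right-to-left maximum letters. -/
def RmalSet (σ : Equiv.Perm (Fin n)) : Finset (Fin n) :=
  (Finset.univ.filter (fun i => ∀ j, i < j → σ j < σ i)).image σ

/-- The number of right-to-left maxima. -/
def rmax (σ : Equiv.Perm (Fin n)) : ℕ := (RmalSet σ).card

/-- Left-to-right minimum letters. -/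
def LmilSet (σ : Equiv.Perm (Fin n)) : Finset (Fin n) :=
  (Finset.univ.filter (fun i => ∀ j, j < i → σ i < σ j)).image σ

/-- The number of left-to-right minima. -/
def lmin (σ : Equiv.Perm (Fin n)) : ℕ := (LmilSet σ).card

/-- Left-to-right minimum places. -/
def LmipSet (σ : Equiv.Perm (Fin n)) : Finset (Fin n) :=
  Finset.univ.filter (fun i => ∀ j, j < i → σ i < σ j)

/-- Left-to-right maximum letters. -/
def LmalSet (σ : Equiv.Perm (Fin n)) : Finset (Fin n) :=
  (Finset.univ.filter (fun i => ∀ j, j < i → σ j < σ i)).image σ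

/-- The number of left-to-right maxima. -/
def lmax (σ : Equiv.Perm (Fin n)) : ℕ := (LmalSet σ).card

/-- Left-to-right maximum places. -/
def LmapSet (σ : Equiv.Perm (Fin n)) : Finset (Fin n) :=
  Finset.univ.filter (fun i => ∀ j, j < i → σ j < σ i)

/-- `Cyc σ`: the set of smallest elements of the cycles of `σ`
(`i` is smallest in its cycle iff `i ≤ σ^k i` for all `k`). -/
def CycSet (σ : Equiv.Perm (Fin n)) : Finset (Fin n) :=
  Finset.univ.filter (fun i => ∀ k : ℕ, i ≤ (σ ^ k) i)

/-- The number of cycles of `σ` (fixed points included). -/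
def cyc (σ : Equiv.Perm (Fin n)) : ℕ := (CycSet σ).card

/-- One step of the sorting process computing the sorting index: repeatedly
put the largest not-yet-fixed letter `j` in its place by the transposition
`(i j)` where `i = σ⁻¹ j` is the place of the letter `j`, recording the
distance `j - i`.  This produces the unique factorization
`σ = (i₁ j₁)(i₂ j₂)⋯(i_k j_k)` with `j₁ < ⋯ < j_k`, `i_r < j_r`, and sums
the `j_r - i_r`.  The fuel `n` is always sufficient. -/
def sorAux : ℕ → Equiv.Perm (Fin n) → ℕ
  | 0, _ => 0
  | (fuel + 1), σ =>
    if h : σ.support.Nonempty then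
      (((σ.support.max' h : Fin n) : ℕ) - ((σ⁻¹ (σ.support.max' h) : Fin n) : ℕ)) +
        sorAux fuel (σ * Equiv.swap (σ⁻¹ (σ.support.max' h)) (σ.support.max' h))
    else 0

/-- The sorting index of Petersen. -/
def sor (σ : Equiv.Perm (Fin n)) : ℕ := sorAux n σ

theorem bcode_exists (σ : Equiv.Perm (Fin n)) (i : Fin n) :
    ∃ k : ℕ, 0 < k ∧ (σ⁻¹ ^ k) i ≤ i := by
  refine ⟨orderOf σ⁻¹, orderOf_pos σ⁻¹, ?_⟩
  rw [pow_orderOf_eq_one]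
  simp

/-- The `B`-code of `σ`: `Bcode σ i = σ^(-k) i` where `k ≥ 1` is minimal with
`σ^(-k) i ≤ i`. -/
def Bcode (σ : Equiv.Perm (Fin n)) (i : Fin n) : Fin n :=
  (σ⁻¹ ^ (Nat.find (bcode_exists σ i))) i

/-- The `B`-code as a sequence in `L_n` (1-indexed values: the entry at place
`i` is the 1-indexed name of the letter `Bcode σ i`). -/
def BcodeNat (σ : Equiv.Perm (Fin n)) : Fin n → ℕ :=
  fun i => ((Bcode σ i : Fin n) : ℕ) + 1

/-- The Lehmer code: `Leh σ i = #{j : j ≤ i ∧ σ j ≤ σ i}` (1-indexed values). -/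
def Leh (σ : Equiv.Perm (Fin n)) : Fin n → ℕ :=
  fun i => (Finset.univ.filter (fun j => j ≤ i ∧ σ j ≤ σ i)).card

/-- The `A`-code: `A σ := Leh σ⁻¹`. -/
def Acode (σ : Equiv.Perm (Fin n)) : Fin n → ℕ := Leh σ⁻¹

/-- `O(code) := {i : code i = 1}` (for `1`-indexed codes in `L_n`). -/
def Oset (code : Fin n → ℕ) : Finset (Fin n) :=
  Finset.univ.filter (fun i => code i = 1)

/-- `Lmic1 σ := O(B σ)`, the set of places where the `B`-code equals `1`,
equivalently the left-to-right minima of the shifted cycle containing `1`. -/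
def Lmic1Set (σ : Equiv.Perm (Fin n)) : Finset (Fin n) :=
  Oset (BcodeNat σ)

/-- `lmic1 σ := #{i : (B σ)_i = 1}`. -/
def lmic1 (σ : Equiv.Perm (Fin n)) : ℕ := (Lmic1Set σ).card

/-- The bijection `φ = B⁻¹ ∘ A` of Foata–Han. -/
def phi (σ : Equiv.Perm (Fin n)) : Equiv.Perm (Fin n) :=
  Function.invFun BcodeNat (Acode σ)

/-- The algorithm computing the induced set of a code: the list argument is
the list of places still to process (from the last to the first), `S` is the
set of letters still available.  At place `i` we pick the `(code i)`-th
smallest element `l` of `S` (1-indexed), put the pairs `(l, j)` for `j ∈ S`,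
`j > l` into the answer and remove `l` from `S`. -/
def inducedAux : List (Fin n) → Finset (Fin n) → (Fin n → ℕ) → Finset (Fin n × Fin n)
  | [], _, _ => ∅
  | (i :: is), S, code =>
      ((S.filter (fun j => (S.sort (· ≤ ·)).getD (code i - 1) i < j)).image
          (fun j => ((S.sort (· ≤ ·)).getD (code i - 1) i, j))) ∪
        inducedAux is (S.erase ((S.sort (· ≤ ·)).getD (code i - 1) i)) code

/-- The induced set `⟨code⟩` of a code in `L_n`. -/
def induced (code : Fin n → ℕ) : Finset (Fin n × Fin n) :=
  inducedAux (List.finRange n).reverse Finset.univ code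

/-- The sorting set `Sor σ := ⟨B σ⟩`. -/
def SorSet (σ : Equiv.Perm (Fin n)) : Finset (Fin n × Fin n) :=
  induced (BcodeNat σ)

/-- The descent set (as a set of places `i`, `0`-indexed, such that
`σ i > σ (i+1)`). -/
def DesSet (σ : Equiv.Perm (Fin n)) : Finset (Fin n) :=
  Finset.univ.filter (fun i => ∃ h : (i : ℕ) + 1 < n, σ ⟨(i : ℕ) + 1, h⟩ < σ i)

/-- The major index (descents being counted `1`-indexed). -/
def maj (σ : Equiv.Perm (Fin n)) : ℕ :=
  ∑ i ∈ DesSet σ, ((i : ℕ) + 1)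

/-- The charge `chg σ := ∑_{i ∈ Des σ⁻¹} (n - i)` (descents `1`-indexed). -/
def chg (σ : Equiv.Perm (Fin n)) : ℕ :=
  ∑ i ∈ DesSet σ⁻¹, (n - ((i : ℕ) + 1))

/-- The reverse-complement of `σ` : `τ i = n + 1 - σ (n + 1 - i)` (1-indexed). -/
def revcomp (σ : Equiv.Perm (Fin n)) : Equiv.Perm (Fin n) :=
  Fin.revPerm * σ * Fin.revPerm

/-- The reverse major index `rmaj σ := maj (revcomp σ)`. -/
def rmaj (σ : Equiv.Perm (Fin n)) : ℕ := maj (revcomp σ)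

end

end SortIdx


/-!
Both generating functions satisfy `F (n + 1) = W n * F n` with
`W n = ∑_{p ≤ n} q ^ (n - p) * x ^ [p = n] * y ^ [p = 0]` (letters and places `0, …, n`).

Inversion side: inserting the largest letter `n` at place `p` into `σ ∈ S_n` creates `n - p`
inversions, a new right-to-left minimum iff `p = n`, and a new left-to-right minimum iff `p = 0`.

Sorting side: every `τ ∈ S_{n+1}` is uniquely `σ * (i n)` with `σ ∈ S_n` fixing `n`, the last
transposition of its sorting factorization; it adds `n - i` to `sor`, a new cycle iff `i = n`, and
the `B`-code of `τ` is that of `σ` followed by `i` (the `τ⁻¹`-orbits are the `σ⁻¹`-orbits with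
detours through `n`, which lies above every place `j < n`), so `lmic1` grows iff `i = 0`.

Finally `W 0 = x y` and `W (r - 1) = x + [r]_q + y q ^ (r - 1) - 1 - q ^ (r - 1)` for `r ≥ 2`.
-/

open Equiv Finset

theorem Fin.card_filter_univ_succAbove {n : ℕ} (p : Fin (n + 1)) (P : Fin (n + 1) → Prop)
    [DecidablePred P] : #{x | P x} = (if P p then 1 else 0) + #{x | P (p.succAbove x)} := by
  simp only [Finset.card_filter]
  exact Fin.sum_univ_succAbove _ p

theorem Fin.forall_succAbove_le_iff {n : ℕ} (p : Fin (n + 1)) :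
    (∀ i, p.succAbove i ≤ p) ↔ p = Fin.last n := by
  refine ⟨fun h => ?_, fun hp i => hp ▸ by simp [Fin.le_last]⟩
  by_contra hp
  obtain ⟨k, rfl⟩ := Fin.exists_castSucc_eq.2 hp
  simpa [Fin.castSucc_lt_succ] using h k

theorem Fin.forall_le_succAbove_iff {n : ℕ} (p : Fin (n + 1)) :
    (∀ i, p ≤ p.succAbove i) ↔ p = 0 := by
  refine ⟨fun h => ?_, fun hp i => hp ▸ Fin.zero_le _⟩
  by_contra hp
  obtain ⟨k, rfl⟩ := Fin.exists_succ_eq.2 hp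
  simpa [Fin.castSucc_lt_succ] using h k

theorem Fin.not_last_lt_castSucc {n : ℕ} (i : Fin n) : ¬ Fin.last n < i.castSucc :=
  (Fin.castSucc_lt_last i).not_gt

theorem Fin.not_last_le_castSucc {n : ℕ} (i : Fin n) : ¬ Fin.last n ≤ i.castSucc :=
  (Fin.castSucc_lt_last i).not_ge

theorem Fintype.sum_eq_mul_of_bijective_uncurry {α β γ R : Type*} [Fintype α] [Fintype β]
    [Fintype γ] [CommSemiring R] {f : α → β → γ} (hf : Function.Bijective (Function.uncurry f))
    (w : γ → R) (c : α → R) (v : β → R) (hw : ∀ a b, w (f a b) = c a * v b) :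
    ∑ z, w z = (∑ a, c a) * ∑ b, v b := by
  rw [← Fintype.sum_bijective _ hf (fun ab => c ab.1 * v ab.2) w fun ab => (hw ab.1 ab.2).symm,
    Finset.sum_mul_sum, Fintype.sum_prod_type]

namespace SortIdx

variable {n : ℕ}

def insertMax (p : Fin (n + 1)) (σ : Perm (Fin n)) : Perm (Fin (n + 1)) :=
  (finSuccEquiv' p).trans ((Equiv.optionCongr σ).trans (finSuccEquiv' (Fin.last n)).symm)

@[simp] theorem insertMax_apply_self (p : Fin (n + 1)) (σ : Perm (Fin n)) :
    insertMax p σ p = Fin.last n := by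
  simp [insertMax]

@[simp] theorem insertMax_apply_succAbove (p : Fin (n + 1)) (σ : Perm (Fin n)) (j : Fin n) :
    insertMax p σ (p.succAbove j) = (σ j).castSucc := by
  simp [insertMax, ← Fin.succAbove_last]

theorem insertMax_injective :
    Function.Injective (Function.uncurry (insertMax (n := n))) := by
  rintro ⟨p, σ⟩ ⟨p', σ'⟩ h
  have hp : p = p' := by
    by_contra hne
    obtain ⟨j, rfl⟩ := Fin.exists_succAbove_eq hne
    have h' := congrArg (fun τ : Perm _ => τ (p'.succAbove j)) h
    simp only [Function.uncurry_apply_pair, insertMax_apply_self,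
      insertMax_apply_succAbove] at h'
    exact (Fin.castSucc_lt_last _).ne' h'
  subst hp
  refine Prod.ext rfl (Equiv.ext fun j => Fin.castSucc_injective n ?_)
  simpa using congrArg (fun τ : Perm _ => τ (p.succAbove j)) h

theorem insertMax_bijective :
    Function.Bijective (Function.uncurry (insertMax (n := n))) := by
  rw [Fintype.bijective_iff_injective_and_card]
  exact ⟨insertMax_injective, by simp [Fintype.card_perm, Nat.factorial_succ]⟩

theorem inv_eq_sum (σ : Perm (Fin n)) : inv σ = ∑ a, #{b | a < b ∧ σ b < σ a} := by
  rw [inv, Finset.card_filter, Fintype.sum_prod_type]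
  simp only [Finset.card_filter]

theorem inv_insertMax (p : Fin (n + 1)) (σ : Perm (Fin n)) :
    inv (insertMax p σ) = (n - p) + inv σ := by
  have hIoi : #{b | p < p.succAbove b} = n - p := by
    simpa [Finset.filter_lt_eq_Ioi] using (Fin.card_filter_univ_succAbove p (p < ·)).symm
  rw [inv_eq_sum, inv_eq_sum, Fin.sum_univ_succAbove _ p]
  simp [Fin.card_filter_univ_succAbove p, Fin.succAbove_lt_succAbove_iff, hIoi,
    Fin.not_last_lt_castSucc]

theorem rmin_eq_card_rmipSet (σ : Perm (Fin n)) : rmin σ = #(RmipSet σ) :=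
  Finset.card_image_of_injective _ σ.injective

theorem lmin_eq_card_lmipSet (σ : Perm (Fin n)) : lmin σ = #(LmipSet σ) :=
  Finset.card_image_of_injective _ σ.injective

theorem rmin_insertMax (p : Fin (n + 1)) (σ : Perm (Fin n)) :
    rmin (insertMax p σ) = (if p = Fin.last n then 1 else 0) + rmin σ := by
  rw [rmin_eq_card_rmipSet, rmin_eq_card_rmipSet, RmipSet, RmipSet,
    Fin.card_filter_univ_succAbove p]
  simp [Fin.forall_iff_succAbove p, Fin.not_last_lt_castSucc, Fin.forall_succAbove_le_iff]

theorem lmin_insertMax (p : Fin (n + 1)) (σ : Perm (Fin n)) :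
    lmin (insertMax p σ) = (if p = 0 then 1 else 0) + lmin σ := by
  rw [lmin_eq_card_lmipSet, lmin_eq_card_lmipSet, LmipSet, LmipSet,
    Fin.card_filter_univ_succAbove p]
  simp [Fin.forall_iff_succAbove p, Fin.not_last_lt_castSucc, Fin.forall_le_succAbove_iff]

def extendLast : Perm (Fin n) →* Perm (Fin (n + 1)) where
  toFun := insertMax (Fin.last n)
  map_one' := by
    ext x
    refine Fin.lastCases ?_ (fun j => ?_) x <;> simp [← Fin.succAbove_last]
  map_mul' σ τ := by
    ext x
    refine Fin.lastCases ?_ (fun j => ?_) x <;> simp [← Fin.succAbove_last]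

@[simp] theorem extendLast_apply_last (σ : Perm (Fin n)) : extendLast σ (Fin.last n) = Fin.last n :=
  insertMax_apply_self _ _

@[simp] theorem extendLast_apply_castSucc (σ : Perm (Fin n)) (j : Fin n) :
    extendLast σ j.castSucc = (σ j).castSucc := by
  rw [← Fin.succAbove_last_apply]
  exact insertMax_apply_succAbove _ σ j

theorem extendLast_swap (a b : Fin n) :
    extendLast (swap a b) = swap a.castSucc b.castSucc := by
  ext x
  refine Fin.lastCases ?_ (fun j => ?_) x
  · rw [extendLast_apply_last, swap_apply_of_ne_of_ne (Fin.castSucc_lt_last a).ne'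
      (Fin.castSucc_lt_last b).ne']
  · rw [extendLast_apply_castSucc, (Fin.castSucc_injective n).swap_apply]

theorem support_extendLast (σ : Perm (Fin n)) :
    (extendLast σ).support = σ.support.image Fin.castSucc := by
  ext x
  refine Fin.lastCases ?_ (fun j => ?_) x
  · simp [(Fin.castSucc_lt_last _).ne]
  · simp [(Fin.castSucc_injective n).eq_iff]

theorem extendLast_injective : Function.Injective (extendLast (n := n)) := fun σ τ h =>
  Equiv.ext fun j => Fin.castSucc_injective n <| by
    rw [← extendLast_apply_castSucc, h, extendLast_apply_castSucc]

def mulSwapLast (i : Fin (n + 1)) (σ : Perm (Fin n)) : Perm (Fin (n + 1)) :=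
  extendLast σ * swap i (Fin.last n)

theorem mulSwapLast_last (σ : Perm (Fin n)) : mulSwapLast (Fin.last n) σ = extendLast σ := by
  rw [mulSwapLast, swap_self, ← Perm.one_def, mul_one]

theorem mulSwapLast_apply_self (i : Fin (n + 1)) (σ : Perm (Fin n)) :
    mulSwapLast i σ i = Fin.last n := by
  simp [mulSwapLast]

theorem mulSwapLast_inv_apply_last (i : Fin (n + 1)) (σ : Perm (Fin n)) :
    (mulSwapLast i σ)⁻¹ (Fin.last n) = i := by
  rw [Perm.inv_eq_iff_eq, mulSwapLast_apply_self]

theorem mulSwapLast_inv_apply_castSucc (i : Fin (n + 1)) (σ : Perm (Fin n)) (j : Fin n) :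
    (mulSwapLast i σ)⁻¹ j.castSucc = swap i (Fin.last n) (σ⁻¹ j).castSucc := by
  rw [mulSwapLast, mul_inv_rev, swap_inv, Perm.mul_apply, ← map_inv, extendLast_apply_castSucc]

theorem mulSwapLast_bijective : Function.Bijective (Function.uncurry (mulSwapLast (n := n))) := by
  rw [Fintype.bijective_iff_injective_and_card]
  refine ⟨fun ⟨i, σ⟩ ⟨i', σ'⟩ h => ?_, by simp [Fintype.card_perm, Nat.factorial_succ]⟩
  have hi : i = i' := by
    rw [← mulSwapLast_inv_apply_last i σ, ← mulSwapLast_inv_apply_last i' σ']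
    exact congrArg (fun τ : Perm _ => τ⁻¹ (Fin.last n)) h
  subst hi
  refine Prod.ext rfl (extendLast_injective ?_)
  simpa [mulSwapLast] using h

theorem sorAux_one (m fuel : ℕ) : sorAux fuel (1 : Perm (Fin m)) = 0 := by
  cases fuel <;> simp [sorAux]

theorem sorAux_extendLast (fuel : ℕ) (σ : Perm (Fin n)) :
    sorAux fuel (extendLast σ) = sorAux fuel σ := by
  induction fuel generalizing σ with
  | zero => rfl
  | succ fuel ih =>
    by_cases h : σ.support.Nonempty
    · have h' : (extendLast σ).support.Nonempty := by
        rw [support_extendLast]; exact h.image _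
      have hmax : (extendLast σ).support.max' h' = (σ.support.max' h).castSucc := by
        simp only [support_extendLast, Finset.max'_image Fin.strictMono_castSucc.monotone]
      simp only [sorAux, dif_pos h, dif_pos h', hmax, ← map_inv, extendLast_apply_castSucc,
        Fin.val_castSucc, ← extendLast_swap, ← map_mul, ih]
    · have h' : ¬ (extendLast σ).support.Nonempty := by
        rwa [support_extendLast, Finset.image_nonempty]
      simp only [sorAux, dif_neg h, dif_neg h']

theorem lt_max'_of_mem_support_mul_swap {m : ℕ} (σ : Perm (Fin m)) (h : σ.support.Nonempty)
    {x : Fin m} (hx : x ∈ (σ * swap (σ⁻¹ (σ.support.max' h)) (σ.support.max' h)).support) :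
    x < σ.support.max' h := by
  set M := σ.support.max' h
  have hxM : x ≠ M := by
    rintro rfl
    simp at hx
  have hxs : x ∈ σ.support := by
    by_contra hxs
    rw [Perm.notMem_support] at hxs
    have hxa : x ≠ σ⁻¹ M := fun hxa => hxM (by rw [← hxs, hxa]; simp)
    rw [Perm.mem_support, Perm.mul_apply, swap_apply_of_ne_of_ne hxa hxM, hxs] at hx
    exact hx rfl
  exact lt_of_le_of_ne (Finset.le_max' _ _ hxs) hxM

theorem sorAux_eq_of_support_lt {m : ℕ} {fuel fuel' : ℕ} (hle : fuel ≤ fuel') (σ : Perm (Fin m))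
    (hσ : ∀ x ∈ σ.support, (x : ℕ) < fuel) : sorAux fuel σ = sorAux fuel' σ := by
  induction fuel generalizing σ fuel' with
  | zero =>
    obtain rfl : σ = 1 := Perm.support_eq_empty_iff.1 <|
      Finset.eq_empty_of_forall_notMem fun x hx => (hσ x hx).not_ge (Nat.zero_le _)
    rw [sorAux_one, sorAux_one]
  | succ fuel ih =>
    obtain ⟨fuel', rfl⟩ : ∃ f, fuel' = f + 1 := ⟨fuel' - 1, by omega⟩
    by_cases h : σ.support.Nonempty
    · simp only [sorAux, dif_pos h]
      refine congrArg _ (ih (by omega) _ fun x hx => ?_)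
      have := hσ _ (Finset.max'_mem _ h)
      have := lt_max'_of_mem_support_mul_swap σ h hx
      omega
    · simp only [sorAux, dif_neg h]

theorem sor_mulSwapLast (i : Fin (n + 1)) (σ : Perm (Fin n)) :
    sor (mulSwapLast i σ) = (n - i) + sor σ := by
  rcases Fin.eq_castSucc_or_eq_last i with ⟨i, rfl⟩ | rfl
  · have hlast : Fin.last n ∈ (mulSwapLast i.castSucc σ).support := by
      simp [mulSwapLast, (Fin.castSucc_lt_last _).ne]
    have hne : (mulSwapLast i.castSucc σ).support.Nonempty := ⟨_, hlast⟩
    have hmax : (mulSwapLast i.castSucc σ).support.max' hne = Fin.last n :=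
      le_antisymm (Fin.le_last _) (Finset.le_max' _ _ hlast)
    rw [sor, sorAux, dif_pos hne, hmax, mulSwapLast_inv_apply_last, mulSwapLast,
      mul_swap_mul_self, sorAux_extendLast, Fin.val_last, sor]
  · rw [mulSwapLast_last, sor, sorAux_extendLast,
      ← sorAux_eq_of_support_lt n.le_succ σ fun x _ => x.isLt, Fin.val_last, Nat.sub_self,
      zero_add, sor]

def DetoursThroughLast (ρ : Perm (Fin (n + 1))) (π : Perm (Fin n)) : Prop :=
  ∀ x : Fin n, ρ x.castSucc = (π x).castSucc ∨
    ρ x.castSucc = Fin.last n ∧ ρ (Fin.last n) = (π x).castSucc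

theorem detoursThroughLast_mulSwapLast (i : Fin (n + 1)) (σ : Perm (Fin n)) :
    DetoursThroughLast (mulSwapLast i σ) σ := by
  intro x
  by_cases hx : x.castSucc = i
  · subst hx
    simp [mulSwapLast]
  · simp [mulSwapLast, swap_apply_of_ne_of_ne hx (Fin.castSucc_lt_last x).ne]

theorem detoursThroughLast_inv_mulSwapLast (i : Fin (n + 1)) (σ : Perm (Fin n)) :
    DetoursThroughLast (mulSwapLast i σ)⁻¹ σ⁻¹ := by
  intro x
  rw [mulSwapLast_inv_apply_castSucc, mulSwapLast_inv_apply_last]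
  by_cases hx : (σ⁻¹ x).castSucc = i
  · exact .inr ⟨by rw [hx, swap_apply_left], hx.symm⟩
  · exact .inl (swap_apply_of_ne_of_ne hx (Fin.castSucc_lt_last _).ne)

/-- The `ρ`-orbit of `j.castSucc` runs through the `π`-orbit of `j` in order, with only
visits to `last` in between. -/
theorem DetoursThroughLast.exists_pow_eq {ρ : Perm (Fin (n + 1))} {π : Perm (Fin n)}
    (h : DetoursThroughLast ρ π) (j : Fin n) (m : ℕ) :
    ∃ k, m ≤ k ∧ k ≤ 2 * m ∧ (ρ ^ k) j.castSucc = ((π ^ m) j).castSucc ∧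
      ∀ l, 0 < l → l < k → (ρ ^ l) j.castSucc = Fin.last n ∨
        ∃ m', 0 < m' ∧ m' < m ∧ (ρ ^ l) j.castSucc = ((π ^ m') j).castSucc := by
  induction m with
  | zero => exact ⟨0, le_rfl, le_rfl, by simp, fun l h0 hl => absurd hl (by omega)⟩
  | succ m ih =>
    obtain ⟨k, hmk, hkm, hk, hmid⟩ := ih
    have hstep : ∀ c, (ρ ^ (c + k)) j.castSucc = (ρ ^ c) ((π ^ m) j).castSucc := by
      intro c; rw [pow_add, Perm.mul_apply, hk]
    have hmid' : ∀ l, 0 < l → l ≤ k → (ρ ^ l) j.castSucc = Fin.last n ∨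
        ∃ m', 0 < m' ∧ m' < m + 1 ∧ (ρ ^ l) j.castSucc = ((π ^ m') j).castSucc := by
      intro l h0 hl
      rcases hl.lt_or_eq with hl | rfl
      · rcases hmid l h0 hl with hlast | ⟨m', hm0, hmm, hv⟩
        exacts [.inl hlast, .inr ⟨m', hm0, by omega, hv⟩]
      · exact .inr ⟨m, by omega, by omega, hk⟩
    rcases h ((π ^ m) j) with hone | ⟨hlast, hback⟩
    · refine ⟨1 + k, by omega, by omega, by rw [hstep, pow_one, hone, pow_succ', Perm.mul_apply],
        fun l h0 hl => hmid' l h0 (by omega)⟩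
      
    · refine ⟨2 + k, by omega, by omega, ?_, fun l h0 hl => ?_⟩
      · rw [hstep, pow_two, Perm.mul_apply, hlast, hback, pow_succ', Perm.mul_apply]
      · rcases Nat.lt_or_ge k l with hkl | hlk
        · obtain rfl : l = 1 + k := by omega
          rw [hstep, pow_one, hlast]
          exact .inl rfl
        · exact hmid' l h0 hlk

theorem DetoursThroughLast.forall_le_pow_castSucc_iff {ρ : Perm (Fin (n + 1))} {π : Perm (Fin n)}
    (h : DetoursThroughLast ρ π) (j : Fin n) :
    (∀ k, j.castSucc ≤ (ρ ^ k) j.castSucc) ↔ ∀ m, j ≤ (π ^ m) j := by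
  refine ⟨fun hρ m => ?_, fun hπ k => ?_⟩
  · obtain ⟨k, -, -, hk, -⟩ := h.exists_pow_eq j m
    simpa [hk] using hρ k
  · obtain ⟨k', hkk', -, hk', hmid⟩ := h.exists_pow_eq j k
    rcases hkk'.eq_or_lt with rfl | hlt
    · simpa [hk'] using hπ k
    rcases Nat.eq_zero_or_pos k with rfl | hk0
    · simp
    rcases hmid k hk0 hlt with hlast | ⟨m', -, -, hv⟩
    · simp [hlast, Fin.le_last]
    · simpa [hv] using hπ m'

theorem forall_last_le_pow_mulSwapLast_iff (i : Fin (n + 1)) (σ : Perm (Fin n)) :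
    (∀ k, Fin.last n ≤ (mulSwapLast i σ ^ k) (Fin.last n)) ↔ i = Fin.last n := by
  refine ⟨fun h => ?_, ?_⟩
  · by_contra hi
    obtain ⟨i, rfl⟩ := Fin.exists_castSucc_eq.2 hi
    simpa [mulSwapLast, Fin.not_last_le_castSucc] using h 1
  · rintro rfl k
    rw [mulSwapLast_last, ← map_pow, extendLast_apply_last]

theorem cyc_mulSwapLast (i : Fin (n + 1)) (σ : Perm (Fin n)) :
    cyc (mulSwapLast i σ) = (if i = Fin.last n then 1 else 0) + cyc σ := by
  rw [cyc, cyc, CycSet, CycSet, Fin.card_filter_univ_succAbove (Fin.last n)]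
  simp only [Fin.succAbove_last_apply,
    (detoursThroughLast_mulSwapLast i σ).forall_le_pow_castSucc_iff,
    forall_last_le_pow_mulSwapLast_iff]

theorem bcode_eq_of_minimal {m : ℕ} (σ : Perm (Fin m)) {i : Fin m} {k : ℕ} (hk : 0 < k)
    (hval : (σ⁻¹ ^ k) i ≤ i) (hmin : ∀ l, 0 < l → l < k → ¬(σ⁻¹ ^ l) i ≤ i) :
    Bcode σ i = (σ⁻¹ ^ k) i := by
  have hfind : Nat.find (bcode_exists σ i) = k :=
    (Nat.find_eq_iff _).2 ⟨⟨hk, hval⟩, fun l hl ⟨h0, hv⟩ => hmin l h0 hl hv⟩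
  rw [Bcode, hfind]

theorem bcode_mulSwapLast_last (i : Fin (n + 1)) (σ : Perm (Fin n)) :
    Bcode (mulSwapLast i σ) (Fin.last n) = i := by
  rw [bcode_eq_of_minimal _ one_pos (Fin.le_last _) (fun l h0 hl => absurd hl (by omega)),
    pow_one, mulSwapLast_inv_apply_last]

theorem bcode_mulSwapLast_castSucc (i : Fin (n + 1)) (σ : Perm (Fin n)) (j : Fin n) :
    Bcode (mulSwapLast i σ) j.castSucc = (Bcode σ j).castSucc := by
  obtain ⟨hK0, hKval⟩ := Nat.find_spec (bcode_exists σ j)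
  obtain ⟨k, hKk, -, hk, hmid⟩ :=
    (detoursThroughLast_inv_mulSwapLast i σ).exists_pow_eq j (Nat.find (bcode_exists σ j))
  have hkval : ((mulSwapLast i σ)⁻¹ ^ k) j.castSucc ≤ j.castSucc := by
    rw [hk]; exact Fin.castSucc_le_castSucc_iff.2 hKval
  refine (bcode_eq_of_minimal _ (by omega) hkval fun l h0 hl => ?_).trans hk
  rcases hmid l h0 hl with hlast | ⟨m', hm0, hmK, hv⟩
  · rw [hlast]; exact Fin.not_last_le_castSucc j
  · rw [hv, Fin.castSucc_le_castSucc_iff]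
    exact fun hle => Nat.find_min (bcode_exists σ j) hmK ⟨hm0, hle⟩

theorem lmic1_mulSwapLast (i : Fin (n + 1)) (σ : Perm (Fin n)) :
    lmic1 (mulSwapLast i σ) = (if i = 0 then 1 else 0) + lmic1 σ := by
  rw [lmic1, lmic1, Lmic1Set, Lmic1Set, Oset, Oset, Fin.card_filter_univ_succAbove (Fin.last n)]
  simp only [BcodeNat, Fin.succAbove_last_apply, bcode_mulSwapLast_last,
    bcode_mulSwapLast_castSucc, Fin.val_castSucc, Nat.add_eq_right, Fin.val_eq_zero_iff]

variable {R : Type*} [CommRing R]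

def insertionWeight (q x y : R) (n : ℕ) (p : Fin (n + 1)) : R :=
  q ^ (n - p) * x ^ (if p = Fin.last n then 1 else 0) * y ^ (if p = 0 then 1 else 0)

theorem sum_insertionWeight (q x y : R) {n : ℕ} (hn : 1 ≤ n) :
    ∑ p, insertionWeight q x y n p =
      x + ∑ t ∈ range (n + 1), q ^ t + y * q ^ n - 1 - q ^ n := by
  have hlast : (Fin.last n : Fin (n + 1)) ≠ 0 := by
    rw [Ne, Fin.ext_iff, Fin.val_last, Fin.val_zero]; omega
  have hweight : ∀ p, insertionWeight q x y n p =
      q ^ (n - p) + (if p = Fin.last n then x - 1 else 0) +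
        (if p = 0 then (y - 1) * q ^ n else 0) := by
    intro p
    rcases eq_or_ne p (Fin.last n) with rfl | hpl
    · simp [insertionWeight, hlast]
    rcases eq_or_ne p 0 with rfl | hp0
    · simp only [insertionWeight, Fin.val_zero, Nat.sub_zero, hlast.symm, if_true, if_false,
        pow_zero, pow_one, mul_one, add_zero]
      ring
    · simp [insertionWeight, hpl, hp0]
  have hgeom : ∑ p : Fin (n + 1), q ^ (n - p) = ∑ t ∈ range (n + 1), q ^ t := by
    rw [Fin.sum_univ_eq_sum_range (fun i => q ^ (n - i))]
    exact Finset.sum_range_reflect (q ^ ·) (n + 1)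
  simp only [hweight, Finset.sum_add_distrib, Fintype.sum_ite_eq', hgeom]
  ring

theorem sum_inv_rmin_lmin_succ (q x y : R) (n : ℕ) :
    ∑ σ : Perm (Fin (n + 1)), q ^ inv σ * x ^ rmin σ * y ^ lmin σ =
      (∑ p, insertionWeight q x y n p) * ∑ σ : Perm (Fin n), q ^ inv σ * x ^ rmin σ * y ^ lmin σ :=
  Fintype.sum_eq_mul_of_bijective_uncurry insertMax_bijective _ _ _ fun p σ => by
    rw [inv_insertMax, rmin_insertMax, lmin_insertMax, insertionWeight]
    ring

theorem sum_sor_cyc_lmic1_succ (q x y : R) (n : ℕ) :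
    ∑ σ : Perm (Fin (n + 1)), q ^ sor σ * x ^ cyc σ * y ^ lmic1 σ =
      (∑ p, insertionWeight q x y n p) * ∑ σ : Perm (Fin n), q ^ sor σ * x ^ cyc σ * y ^ lmic1 σ :=
  Fintype.sum_eq_mul_of_bijective_uncurry mulSwapLast_bijective _ _ _ fun i σ => by
    rw [sor_mulSwapLast, cyc_mulSwapLast, lmic1_mulSwapLast, insertionWeight]
    ring

theorem sum_inv_rmin_lmin_eq_prod (q x y : R) (n : ℕ) :
    ∑ σ : Perm (Fin n), q ^ inv σ * x ^ rmin σ * y ^ lmin σ =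
      ∏ m ∈ range n, ∑ p, insertionWeight q x y m p := by
  induction n with
  | zero => simp [inv, rmin, lmin, Finset.eq_empty_of_isEmpty]
  | succ n ih => rw [sum_inv_rmin_lmin_succ, ih, prod_range_succ, mul_comm]

theorem sum_sor_cyc_lmic1_eq_prod (q x y : R) (n : ℕ) :
    ∑ σ : Perm (Fin n), q ^ sor σ * x ^ cyc σ * y ^ lmic1 σ =
      ∏ m ∈ range n, ∑ p, insertionWeight q x y m p := by
  induction n with
  | zero => simp [sor, sorAux, cyc, lmic1, Finset.eq_empty_of_isEmpty]
  | succ n ih => rw [sum_sor_cyc_lmic1_succ, ih, prod_range_succ, mul_comm]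

theorem prod_range_sum_insertionWeight (q x y : R) {n : ℕ} (hn : 1 ≤ n) :
    ∏ m ∈ range n, ∑ p, insertionWeight q x y m p =
      x * y * ∏ r ∈ Icc 2 n, (x + ∑ t ∈ range r, q ^ t + y * q ^ (r - 1) - 1 - q ^ (r - 1)) := by
  induction n, hn using Nat.le_induction with
  | base => simp [insertionWeight]
  | succ n hn ih =>
    rw [prod_range_succ, ih, prod_Icc_succ_top (by omega), sum_insertionWeight q x y hn,
      Nat.add_sub_cancel, mul_assoc]

end SortIdx

open MvPolynomial in
/-- Theorem 1.3(2), generating function.  In `ℤ[q,x,y]`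
(`q = X 0`, `x = X 1`, `y = X 2`):
`∑_σ q^{inv} x^{rmin} y^{lmin} = ∑_σ q^{sor} x^{cyc} y^{lmic₁}
  = xy ∏_{r=2}^n (x + [r]_q + y q^{r-1} - 1 - q^{r-1})`. -/
theorem genfun_three_variables (n : ℕ) (hn : 1 ≤ n) :
    (∑ σ : Equiv.Perm (Fin n),
        (X 0 : MvPolynomial (Fin 3) ℤ) ^ SortIdx.inv σ * X 1 ^ SortIdx.rmin σ *
          X 2 ^ SortIdx.lmin σ) =
      (∑ σ : Equiv.Perm (Fin n),
        (X 0 : MvPolynomial (Fin 3) ℤ) ^ SortIdx.sor σ * X 1 ^ SortIdx.cyc σ *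
          X 2 ^ SortIdx.lmic1 σ) ∧
    (∑ σ : Equiv.Perm (Fin n),
        (X 0 : MvPolynomial (Fin 3) ℤ) ^ SortIdx.sor σ * X 1 ^ SortIdx.cyc σ *
          X 2 ^ SortIdx.lmic1 σ) =
      X 1 * X 2 * ∏ r ∈ Finset.Icc 2 n,
        (X 1 + (∑ t ∈ Finset.range r, (X 0 : MvPolynomial (Fin 3) ℤ) ^ t) +
          X 2 * X 0 ^ (r - 1) - 1 - X 0 ^ (r - 1)) := by
  have hinv := SortIdx.sum_inv_rmin_lmin_eq_prod (X 0 : MvPolynomial (Fin 3) ℤ) (X 1) (X 2) n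
  have hsor := SortIdx.sum_sor_cyc_lmic1_eq_prod (X 0 : MvPolynomial (Fin 3) ℤ) (X 1) (X 2) n
  exact ⟨hinv.trans hsor.symm, hsor.trans (SortIdx.prod_range_sum_insertionWeight _ _ _ hn)⟩
end

section
/- Let σ ∈ S_n, let m be the length of the cycle of σ containing 1, and let w = (w_1, …, w_m) be the word obtained by writing that cycle so that 1 is the last letter, i.e. w_t = σ^t(1) for 1 ≤ t ≤ m (so w_m = 1). Then Lmic1(σ) equals the set of left-to-right minimum letters of the word w, namely {w_t : w_t < w_s for all s < t}. -/
open scoped Classical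

/-!
Reading the cycle of `i` backwards, `Bcode σ i` is the first letter not exceeding `i`. So it is
the smallest letter `1` (here `⟨0, hn⟩`) exactly when `i = σ^t 1` and the letters `σ^s 1`,
`0 < s < t`, passed on the way back all exceed `i`, i.e. when `i` is a left-to-right minimum of
`σ 1, σ^2 1, …`; the search cannot run past `σ^m 1 = 1`, which keeps `t` within the cycle.
-/

theorem Equiv.Perm.inv_pow_pow_apply_of_le {α : Type*} (σ : Equiv.Perm α) {k t : ℕ} (hk : k ≤ t)
    (x : α) : (σ⁻¹ ^ k) ((σ ^ t) x) = (σ ^ (t - k)) x := by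
  rw [← Nat.add_sub_cancel' hk, pow_add, Nat.add_sub_cancel_left, Equiv.Perm.mul_apply, inv_pow,
    Equiv.Perm.inv_def, Equiv.symm_apply_apply]

namespace SortIdx

variable {n : ℕ}

theorem bcode_eq_iff {σ : Equiv.Perm (Fin n)} {i x : Fin n} :
    Bcode σ i = x ↔
      ∃ k, 0 < k ∧ (σ ^ k) x = i ∧ x ≤ i ∧ ∀ s, 0 < s → s < k → i < (σ ^ s) x := by
  constructor
  · rintro rfl
    set k := Nat.find (bcode_exists σ i)
    set b := Bcode σ i
    obtain ⟨hk, hbi⟩ := Nat.find_spec (bcode_exists σ i)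
    have hσb : (σ ^ k) b = i := by simp [b, Bcode, k]
    refine ⟨k, hk, hσb, hbi, fun s hs hsk => ?_⟩
    have hback : (σ⁻¹ ^ (k - s)) i = (σ ^ s) b := by
      rw [← hσb, σ.inv_pow_pow_apply_of_le (k.sub_le s), Nat.sub_sub_self hsk.le]
    have hnot := Nat.find_min (bcode_exists σ i) (show k - s < k by omega)
    rw [hback] at hnot
    exact lt_of_not_ge fun h => hnot ⟨by omega, h⟩
  · rintro ⟨k, hk, rfl, hx, hmin⟩
    have hfind : Nat.find (bcode_exists σ ((σ ^ k) x)) = k := by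
      rw [Nat.find_eq_iff]
      refine ⟨⟨hk, by simpa using hx⟩, fun j hj ⟨hj0, hle⟩ => ?_⟩
      rw [σ.inv_pow_pow_apply_of_le hj.le] at hle
      exact (hmin (k - j) (by omega) (by omega)).not_ge hle
    simp [Bcode, hfind]

theorem mem_Lmic1Set_iff {σ : Equiv.Perm (Fin n)} {i : Fin n} (hn : 0 < n) :
    i ∈ Lmic1Set σ ↔ Bcode σ i = ⟨0, hn⟩ := by
  simp [Lmic1Set, Oset, BcodeNat, Fin.ext_iff]

end SortIdx

/-- Lemma 2.2.  Writing the cycle of `σ` containing the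
smallest letter as the word `w_t = σ^t 1` for `1 ≤ t ≤ m` (`m` the length of
that cycle, so `w_m = 1`), `Lmic₁ σ` is the set of left-to-right minimum
letters of this word. -/
theorem lmic1_eq_lmil_of_shifted_cycle (n : ℕ) (hn : 0 < n) (σ : Equiv.Perm (Fin n)) :
    SortIdx.Lmic1Set σ =
      ((Finset.Icc 1 (Function.minimalPeriod (⇑σ) ⟨0, hn⟩)).filter
          (fun t => ∀ s ∈ Finset.Icc 1 (Function.minimalPeriod (⇑σ) ⟨0, hn⟩),
            s < t → (σ ^ t) ⟨0, hn⟩ < (σ ^ s) ⟨0, hn⟩)).image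
        (fun t => (σ ^ t) ⟨0, hn⟩) := by
  set z : Fin n := ⟨0, hn⟩
  set m := Function.minimalPeriod σ z
  have hz : ∀ x, z ≤ x := fun x => Nat.zero_le x
  have hm : 0 < m := Function.minimalPeriod_pos_of_mem_periodicPts (σ.injective.mem_periodicPts z)
  have hσm : (σ ^ m) z = z := by rw [Equiv.Perm.coe_pow]; exact Function.iterate_minimalPeriod
  ext i
  simp only [SortIdx.mem_Lmic1Set_iff hn, SortIdx.bcode_eq_iff, Finset.mem_image,
    Finset.mem_filter, Finset.mem_Icc]
  constructor
  · rintro ⟨k, hk, rfl, -, hmin⟩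
    have hkm : k ≤ m := by
      by_contra! hmk
      exact (hmin m hm hmk).not_ge (hσm ▸ hz _)
    exact ⟨k, ⟨⟨hk, hkm⟩, fun s hs hsk => hmin s hs.1 hsk⟩, rfl⟩
  · rintro ⟨t, ⟨⟨ht, htm⟩, hmin⟩, rfl⟩
    exact ⟨t, ht, rfl, hz _, fun s hs hst => hmin s ⟨hs, by omega⟩ hst⟩
end

section
/- For every σ ∈ S_n, Lmil(σ) = Lmic1(φ(σ)). -/
/-!
`A(σ)_v = 1` says that no letter smaller than `v` stands to the left of `v` in `σ`, i.e. that `v`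
is a left-to-right minimum letter. It therefore suffices that `B(φ σ) = A(σ)`, i.e. that `B` maps
onto `L_n`. Read `b_i` as the first point `≤ i` of the backward orbit of `i`. If `τ` fixes every
point `≥ m` and `c ≤ m`, then in `τ * (c m)` the backward orbit of `m` steps straight to `c`, so
`b_m = c`, while the backward orbits of the points `i < m` only gain a detour through `m > i`,
which leaves their `b_i` unchanged. Multiplying by `(c₀ 0), (c₁ 1), …` in turn thus realizes
every code.
-/

open scoped Classical

namespace SortIdx

open Equiv Finset

section LinearOrder

variable {α : Type*} [LinearOrder α]

inductive FirstLE (g : Perm α) (i : α) : α → α → Prop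
  | here {x : α} : g x ≤ i → FirstLE g i x (g x)
  | next {x b : α} : i < g x → FirstLE g i (g x) b → FirstLE g i x b

variable {g : Perm α} {i x b : α}

theorem FirstLE.unique {b' : α} (h : FirstLE g i x b) (h' : FirstLE g i x b') : b = b' := by
  induction h with
  | here hle =>
    cases h' with
    | here => rfl
    | next hlt => exact absurd hle (not_le.2 hlt)
  | next hlt _ ih =>
    cases h' with
    | here hle => exact absurd hle (not_le.2 hlt)
    | next _ h' => exact ih h'

theorem firstLE_of_pow {k : ℕ} (hk : 0 < k) (hle : (g ^ k) x ≤ i)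
    (hmin : ∀ l, 0 < l → l < k → i < (g ^ l) x) : FirstLE g i x ((g ^ k) x) := by
  induction k generalizing x with
  | zero => omega
  | succ k ih =>
    rcases Nat.eq_zero_or_pos k with rfl | hpos
    · simpa using FirstLE.here (g := g) (x := x) (by simpa using hle)
    · have hshift : ∀ l, (g ^ (l + 1)) x = (g ^ l) (g x) := fun l => by
        rw [pow_succ, Perm.mul_apply]
      rw [hshift] at hle ⊢
      refine .next (by simpa using hmin 1 one_pos (by omega)) (ih hpos hle fun l hl hlk => ?_)
      simpa [hshift] using hmin (l + 1) (by omega) (by omega)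

/-- The orbits of `swap j m * f` are those of `f` with the fixed point `m` inserted just
before `j`; as `m > i`, this detour does not change the first point `≤ i`. -/
theorem FirstLE.swap_mul {f : Perm α} {j m : α} (hfm : f m = m) (him : i < m) (hxm : x ≠ m)
    (h : FirstLE f i x b) : FirstLE (swap j m * f) i x b := by
  set g := swap j m * f
  have hgm : g m = j := by simp [g, hfm]
  have hg_of_eq : ∀ {y}, f y = j → g y = m := fun hy => by simp [g, hy]
  have hg_of_ne : ∀ {y}, f y ≠ j → f y ≠ m → g y = f y := swap_apply_of_ne_of_ne
  induction h with
  | @here y hle =>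
    have hym : f y ≠ m := (hle.trans_lt him).ne
    by_cases hj : f y = j
    · have hm : FirstLE g i m (f y) := (hgm.trans hj.symm) ▸ .here (hgm.trans hj.symm ▸ hle)
      exact .next (by rw [hg_of_eq hj]; exact him) (by rw [hg_of_eq hj]; exact hm)
    · exact hg_of_ne hj hym ▸ .here (hg_of_ne hj hym ▸ hle)
  | @next y b hlt _ ih =>
    have hym : f y ≠ m := fun h => hxm (f.injective (h.trans hfm.symm))
    by_cases hj : f y = j
    · have hm : FirstLE g i m b :=
        .next (by rw [hgm, ← hj]; exact hlt) (by rw [hgm, ← hj]; exact ih hym)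
      exact .next (by rw [hg_of_eq hj]; exact him) (by rw [hg_of_eq hj]; exact hm)
    · exact .next (hg_of_ne hj hym ▸ hlt) (hg_of_ne hj hym ▸ ih hym)

theorem forall_lt_apply_lt_iff (σ : Perm α) (p : α) :
    (∀ j, j < p → σ p < σ j) ↔ ∀ w, w < σ p → p < σ⁻¹ w := by
  constructor
  · intro h w hw
    by_contra hle
    rcases (not_lt.1 hle).lt_or_eq with hlt | heq
    · exact (h _ hlt).not_gt (by simpa using hw)
    · exact hw.ne (by simp [← heq])
  · intro h j hj
    by_contra hle
    rcases (not_lt.1 hle).lt_or_eq with hlt | heq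
    · exact (h _ hlt).not_gt (by simpa using hj)
    · exact hj.ne (σ.injective heq)

end LinearOrder

variable {n : ℕ}

theorem firstLE_bcode (σ : Perm (Fin n)) (i : Fin n) : FirstLE σ⁻¹ i i (Bcode σ i) := by
  obtain ⟨hk, hle⟩ := Nat.find_spec (bcode_exists σ i)
  refine firstLE_of_pow hk hle fun l hl hlk => ?_
  simpa [hl] using Nat.find_min (bcode_exists σ i) hlk

theorem bcode_eq_of_firstLE {σ : Perm (Fin n)} {i b : Fin n} (h : FirstLE σ⁻¹ i i b) :
    Bcode σ i = b :=
  (firstLE_bcode σ i).unique h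

theorem bcode_eq_inv_apply {σ : Perm (Fin n)} {i : Fin n} (h : σ⁻¹ i ≤ i) :
    Bcode σ i = σ⁻¹ i :=
  bcode_eq_of_firstLE (.here h)

theorem bcode_mul_swap {τ : Perm (Fin n)} {i j m : Fin n} (hτm : τ m = m) (him : i < m) :
    Bcode (τ * swap j m) i = Bcode τ i := by
  apply bcode_eq_of_firstLE
  rw [mul_inv_rev, swap_inv]
  exact (firstLE_bcode τ i).swap_mul (Perm.inv_eq_iff_eq.2 hτm.symm) him him.ne

/-- The witness is `swap (c 0) 0 * swap (c 1) 1 * ⋯ * swap (c (n-1)) (n-1)`. -/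
theorem exists_bcode_eq (c : Fin n → Fin n) (hc : ∀ i, c i ≤ i) : ∃ τ, Bcode τ = c := by
  have hprefix : ∀ m ≤ n, ∃ τ : Perm (Fin n),
      (∀ x : Fin n, m ≤ (x : ℕ) → τ x = x) ∧ ∀ i : Fin n, (i : ℕ) < m → Bcode τ i = c i := by
    intro m
    induction m with
    | zero => exact fun _ => ⟨1, fun _ _ => rfl, fun _ hi => absurd hi (Nat.not_lt_zero _)⟩
    | succ m ih =>
      intro hmn
      obtain ⟨τ, hfix, hcode⟩ := ih (by omega)
      set M : Fin n := ⟨m, hmn⟩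
      have hτM : τ M = M := hfix M le_rfl
      refine ⟨τ * swap (c M) M, fun x hx => ?_, fun i hi => ?_⟩
      · have hMx : M < x := Fin.lt_def.2 hx
        rw [Perm.mul_apply, swap_apply_of_ne_of_ne ((hc M).trans_lt hMx).ne' hMx.ne',
          hfix x (by omega)]
      · rcases Nat.lt_succ_iff_lt_or_eq.1 hi with hi | hi
        · rw [bcode_mul_swap hτM (Fin.lt_def.2 hi), hcode i hi]
        · have hinv : (τ * swap (c M) M)⁻¹ M = c M := by
            rw [mul_inv_rev, swap_inv, Perm.mul_apply, Perm.inv_eq_iff_eq.2 hτM.symm,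
              swap_apply_right]
          rw [show i = M from Fin.ext hi, bcode_eq_inv_apply (by rw [hinv]; exact hc M), hinv]
  obtain ⟨τ, -, hτ⟩ := hprefix n le_rfl
  exact ⟨τ, funext fun i => hτ i i.isLt⟩

theorem one_le_leh (σ : Perm (Fin n)) (i : Fin n) : 1 ≤ Leh σ i :=
  card_pos.2 ⟨i, by simp⟩

theorem leh_le (σ : Perm (Fin n)) (i : Fin n) : Leh σ i ≤ (i : ℕ) + 1 :=
  calc Leh σ i ≤ #(Iic i) := card_le_card fun _ hj => mem_Iic.2 (mem_filter.1 hj).2.1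
    _ = (i : ℕ) + 1 := Fin.card_Iic i

theorem leh_eq_one_iff (σ : Perm (Fin n)) (i : Fin n) :
    Leh σ i = 1 ↔ ∀ j, j < i → σ i < σ j := by
  have hi : i ∈ univ.filter (fun j => j ≤ i ∧ σ j ≤ σ i) := by simp
  rw [Leh, card_eq_one]
  constructor
  · rintro ⟨a, ha⟩ j hj
    rw [ha, mem_singleton] at hi
    by_contra hle
    have hja : j ∈ ({a} : Finset (Fin n)) := ha ▸ by simp [hj.le, not_lt.1 hle]
    exact hj.ne ((mem_singleton.1 hja).trans hi.symm)
  · intro h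
    refine ⟨i, eq_singleton_iff_unique_mem.2 ⟨hi, fun j hj => ?_⟩⟩
    simp only [mem_filter, mem_univ, true_and] at hj
    exact le_antisymm hj.1 (not_lt.1 fun hlt => (h j hlt).not_ge hj.2)

theorem bcodeNat_phi (σ : Perm (Fin n)) : BcodeNat (phi σ) = Acode σ := by
  have hA : ∀ i, Acode σ i ≤ (i : ℕ) + 1 := leh_le σ⁻¹
  obtain ⟨τ, hτ⟩ := exists_bcode_eq (fun i => ⟨Acode σ i - 1, by have := hA i; omega⟩)
    fun i => Fin.le_def.2 (by have := hA i; simp only; omega)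
  refine Function.invFun_eq (f := BcodeNat) ⟨τ, funext fun i => ?_⟩
  have := one_le_leh σ⁻¹ i
  simp only [BcodeNat, hτ, Acode] at this ⊢
  omega

theorem mem_lmilSet_iff (σ : Perm (Fin n)) (v : Fin n) :
    v ∈ LmilSet σ ↔ ∀ w, w < v → σ⁻¹ v < σ⁻¹ w := by
  rw [LmilSet]
  constructor
  · intro hv
    obtain ⟨p, hp, rfl⟩ := mem_image.1 hv
    simpa using (forall_lt_apply_lt_iff σ p).1 (mem_filter.1 hp).2
  · intro h
    refine mem_image.2 ⟨σ⁻¹ v, mem_filter.2 ⟨mem_univ _, ?_⟩, by simp⟩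
    exact (forall_lt_apply_lt_iff σ (σ⁻¹ v)).2 (by simpa using h)

theorem mem_lmic1Set_phi_iff (σ : Perm (Fin n)) (v : Fin n) :
    v ∈ Lmic1Set (phi σ) ↔ Acode σ v = 1 := by
  rw [Lmic1Set, Oset, mem_filter, bcodeNat_phi]
  exact and_iff_right (mem_univ v)

end SortIdx

/-- Lemma 2.3.  `Lmil σ = Lmic₁ (φ σ)`. -/
theorem lmil_eq_lmic1_phi (n : ℕ) (σ : Equiv.Perm (Fin n)) :
    SortIdx.LmilSet σ = SortIdx.Lmic1Set (SortIdx.phi σ) := by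
  ext v
  rw [SortIdx.mem_lmilSet_iff, SortIdx.mem_lmic1Set_phi_iff, SortIdx.Acode,
    SortIdx.leh_eq_one_iff]
end

section
/- For every σ ∈ S_n with B-code B(σ) = (b_1,…,b_n), the sorting index satisfies sor(σ) = Σ_{i=1}^{n} (i − b_i). -/
open scoped Classical

/-! Let `m` be the largest letter moved by `σ` and `a = σ⁻¹ m < m`. One step of sorting replaces
`σ` by `σ * (a m)` and contributes `m - a`; on the `B`-code it changes only the entry at `m`, from
`a` to `m`. Indeed, `(σ * (a m))⁻¹` is `σ⁻¹` with `m` spliced out of its cycle, so for `i < m` the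
walk `σ⁻¹ i, σ⁻² i, …` up to its first letter `≤ i` loses only `m`, which is never `≤ i`; letters
above `m` are fixed by both permutations. -/

/-- `FirstHit f P x y`: `y` is the first of `f x, f (f x), …` that satisfies `P`. -/
inductive FirstHit {α : Type*} (f : α → α) (P : α → Prop) : α → α → Prop
  | here {x : α} : P (f x) → FirstHit f P x (f x)
  | step {x y : α} : ¬ P (f x) → FirstHit f P (f x) y → FirstHit f P x y

namespace FirstHit

variable {α : Type*} {f : α → α} {P : α → Prop}

theorem unique {x y y' : α} (h : FirstHit f P x y) (h' : FirstHit f P x y') : y = y' := by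
  induction h with
  | here hx => cases h' with
    | here _ => rfl
    | step hx' _ => exact absurd hx hx'
  | step hx _ ih => cases h' with
    | here hx' => exact absurd hx' hx
    | step _ h' => exact ih h'

theorem of_iterate {k : ℕ} {x : α} (hk : P (f^[k + 1] x))
    (hmin : ∀ t < k, ¬ P (f^[t + 1] x)) : FirstHit f P x (f^[k + 1] x) := by
  induction k generalizing x with
  | zero => exact here hk
  | succ k ih =>
    refine step (hmin 0 k.succ_pos) ?_
    rw [Function.iterate_succ_apply]
    exact ih hk fun t ht => hmin (t + 1) (by omega)

theorem of_splice {g : α → α} {m : α} (hm : ¬ P m)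
    (hg : ∀ z ≠ m, g z = if f z = m then f m else f z) {x y : α} (h : FirstHit f P x y)
    (hx : x ≠ m) : FirstHit g P x y := by
  -- The second conjunct covers the step at which the orbit of `f` enters `m`.
  suffices (x ≠ m → FirstHit g P x y) ∧ (x = m → ∀ z ≠ m, f z = m → FirstHit g P z y) from
    this.1 hx
  clear hx
  induction h with
  | @here x hfx =>
    have hfx_ne : f x ≠ m := fun h => hm (h ▸ hfx)
    refine ⟨fun hx => ?_, fun hx z hz hfz => ?_⟩
    · have hgx : g x = f x := by rw [hg x hx, if_neg hfx_ne]
      exact hgx ▸ here (hgx ▸ hfx)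
    · subst hx
      have hgz : g z = f x := by rw [hg z hz, if_pos hfz]
      exact hgz ▸ here (hgz ▸ hfx)
  | @step x y hfx _ ih =>
    refine ⟨fun hx => ?_, fun hx z hz hfz => ?_⟩
    · by_cases hfxm : f x = m
      · exact ih.2 hfxm x hx hfxm
      · have hgx : g x = f x := by rw [hg x hx, if_neg hfxm]
        exact step (hgx ▸ hfx) (hgx ▸ ih.1 hfxm)
    · subst hx
      by_cases hfxm : f x = x
      · exact ih.2 hfxm z hz hfz
      · have hgz : g z = f x := by rw [hg z hz, if_pos hfz]
        exact step (hgz ▸ hfx) (hgz ▸ ih.1 hfxm)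

end FirstHit

theorem Equiv.Perm.support_mul_swap_inv_subset {α : Type*} [DecidableEq α] [Fintype α]
    (σ : Equiv.Perm α) (m : α) : (σ * Equiv.swap (σ⁻¹ m) m).support ⊆ σ.support.erase m := by
  intro j hj
  rw [Equiv.Perm.mem_support] at hj
  have hjm : j ≠ m := by rintro rfl; simp at hj
  refine Finset.mem_erase.mpr ⟨hjm, Equiv.Perm.mem_support.mpr fun hσj => hj ?_⟩
  have hj_inv : j ≠ σ⁻¹ m := by rintro rfl; exact hjm (hσj.symm.trans (σ.apply_symm_apply m))
  rw [Equiv.Perm.mul_apply, Equiv.swap_apply_of_ne_of_ne hj_inv hjm, hσj]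

namespace SortIdx

variable {n : ℕ}

theorem firstHit_bcode (σ : Equiv.Perm (Fin n)) (i : Fin n) :
    FirstHit (⇑σ⁻¹) (· ≤ i) i (Bcode σ i) := by
  obtain ⟨hpos, hle⟩ := Nat.find_spec (bcode_exists σ i)
  obtain ⟨k, hk⟩ : ∃ k, Nat.find (bcode_exists σ i) = k + 1 :=
    ⟨_, (Nat.succ_pred_eq_of_pos hpos).symm⟩
  rw [Bcode, hk, Equiv.Perm.coe_pow]
  rw [hk, Equiv.Perm.coe_pow] at hle
  refine FirstHit.of_iterate (P := (· ≤ i)) hle fun t ht hti => ?_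
  exact Nat.find_min (bcode_exists σ i) (by omega : t + 1 < Nat.find (bcode_exists σ i))
    ⟨t.succ_pos, by rwa [Equiv.Perm.coe_pow]⟩

theorem bcode_eq_of_firstHit {σ : Equiv.Perm (Fin n)} {i y : Fin n}
    (h : FirstHit (⇑σ⁻¹) (· ≤ i) i y) : Bcode σ i = y :=
  (firstHit_bcode σ i).unique h

theorem bcode_of_inv_apply_le {σ : Equiv.Perm (Fin n)} {i : Fin n} (h : σ⁻¹ i ≤ i) :
    Bcode σ i = σ⁻¹ i :=
  bcode_eq_of_firstHit (.here h)

theorem bcode_of_apply_eq {σ : Equiv.Perm (Fin n)} {i : Fin n} (h : σ i = i) : Bcode σ i = i := by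
  have h' : σ⁻¹ i = i := Equiv.Perm.inv_eq_iff_eq.mpr h.symm
  rw [bcode_of_inv_apply_le h'.le, h']

@[simp]
theorem bcode_one (i : Fin n) : Bcode 1 i = i :=
  bcode_of_apply_eq rfl

theorem bcode_mul_swap_of_lt (σ : Equiv.Perm (Fin n)) {i m : Fin n} (hi : i < m) :
    Bcode (σ * Equiv.swap (σ⁻¹ m) m) i = Bcode σ i := by
  refine bcode_eq_of_firstHit
    ((firstHit_bcode σ i).of_splice (P := (· ≤ i)) (not_le.mpr hi) ?_ hi.ne)
  intro z hz
  rw [mul_inv_rev, Equiv.swap_inv, Equiv.Perm.mul_apply]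
  split_ifs with hzm
  · rw [hzm, Equiv.swap_apply_right]
  · exact Equiv.swap_apply_of_ne_of_ne (fun h => hz (σ⁻¹.injective h)) hzm

theorem sum_bcode_eq_add_sum_bcode_mul_swap (σ : Equiv.Perm (Fin n)) {m : Fin n}
    (hm : ∀ j ∈ σ.support, j ≤ m) :
    ∑ i : Fin n, ((i : ℕ) - (Bcode σ i : ℕ)) =
      ((m : ℕ) - (σ⁻¹ m : ℕ)) +
        ∑ i : Fin n, ((i : ℕ) - (Bcode (σ * Equiv.swap (σ⁻¹ m) m) i : ℕ)) := by
  set σ' := σ * Equiv.swap (σ⁻¹ m) m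
  have hfix : ∀ j, m < j → σ j = j := fun j hj =>
    Equiv.Perm.notMem_support.mp fun hs => (hm j hs).not_gt hj
  have hinv_le : σ⁻¹ m ≤ m := by
    by_contra! h
    exact h.ne' ((hfix _ h).symm.trans (σ.apply_symm_apply m))
  have hσ'm : σ' m = m := by simp [σ']
  have hrest : ∀ i ≠ m, Bcode σ' i = Bcode σ i := by
    intro i hi
    rcases hi.lt_or_gt with hlt | hgt
    · exact bcode_mul_swap_of_lt σ hlt
    · have hσi := hfix i hgt
      have hσ'i : σ' i = i := by
        rw [Equiv.Perm.mul_apply, Equiv.swap_apply_of_ne_of_ne (hinv_le.trans_lt hgt).ne' hgt.ne',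
          hσi]
      rw [bcode_of_apply_eq hσ'i, bcode_of_apply_eq hσi]
  rw [← Finset.add_sum_erase _ _ (Finset.mem_univ m),
    ← Finset.add_sum_erase _ _ (Finset.mem_univ m), bcode_of_inv_apply_le hinv_le,
    bcode_of_apply_eq hσ'm, Nat.sub_self, zero_add]
  congr 1
  exact Finset.sum_congr rfl fun i hi => by rw [hrest i (Finset.ne_of_mem_erase hi)]

theorem sorAux_eq_sum_bcode (fuel : ℕ) (σ : Equiv.Perm (Fin n))
    (hσ : ∀ j ∈ σ.support, (j : ℕ) < fuel) :
    sorAux fuel σ = ∑ i : Fin n, ((i : ℕ) - (Bcode σ i : ℕ)) := by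
  induction fuel generalizing σ with
  | zero =>
    obtain rfl : σ = 1 := Equiv.Perm.support_eq_empty_iff.mp
      (Finset.eq_empty_of_forall_notMem fun j hj => (hσ j hj).not_ge (Nat.zero_le _))
    simp [sorAux]
  | succ fuel ih =>
    rw [sorAux]
    split_ifs with hne
    · set m := σ.support.max' hne
      have hm_lt : (m : ℕ) < fuel + 1 := hσ m (σ.support.max'_mem hne)
      rw [sum_bcode_eq_add_sum_bcode_mul_swap σ (m := m) fun j hj => σ.support.le_max' j hj, ih]
      intro j hj
      have hj' := Finset.mem_erase.mp (σ.support_mul_swap_inv_subset m hj)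
      have := (σ.support.le_max' j hj'.2).lt_of_ne hj'.1
      omega
    · obtain rfl : σ = 1 :=
        Equiv.Perm.support_eq_empty_iff.mp (Finset.not_nonempty_iff_eq_empty.mp hne)
      simp

end SortIdx

/-- `sor σ = ∑_i (i - b_i)` where `(b_i)` is the `B`-code. -/
theorem sor_eq_sum_bcode (n : ℕ) (σ : Equiv.Perm (Fin n)) :
    SortIdx.sor σ = ∑ i : Fin n, ((i : ℕ) - ((SortIdx.Bcode σ i : Fin n) : ℕ)) :=
  SortIdx.sorAux_eq_sum_bcode n σ fun j _ => j.isLt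
end

section
/- For every σ ∈ S_n, Inv(σ) = ⟨A(σ)⟩; that is, the inversion set of σ equals the induced set of its A-code. -/
open scoped Classical

/-! Reading the places from `n` down to `1`, the letters still available when place `i` is
reached are `σ⁻¹ {1, …, i}`, and `A(σ)_i` is precisely the rank of `σ⁻¹ i` among them. So step `i`
picks `σ⁻¹ i` and records the pairs `(σ⁻¹ i, j)` with `σ⁻¹ i < j` and `σ j < i`: the inversions
of `σ` whose first entry is the place of the letter `i`. -/

namespace Finset

theorem getD_sort_card_filter_le_sub_one {α : Type*} [LinearOrder α] {S : Finset α} {x : α}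
    (hx : x ∈ S) (d : α) : (S.sort (· ≤ ·)).getD (#{y ∈ S | y ≤ x} - 1) d = x := by
  set f := S.orderEmbOfFin rfl
  obtain ⟨j, rfl⟩ : ∃ j, f j = x := by
    rwa [← Set.mem_range, range_orderEmbOfFin]
  have hle : {y ∈ S | y ≤ f j} = (Iic j).map f.toEmbedding := by
    ext y
    simp only [mem_filter, mem_map, mem_Iic, RelEmbedding.coe_toEmbedding]
    constructor
    · rintro ⟨hy, hyj⟩
      obtain ⟨i, rfl⟩ : ∃ i, f i = y := by rwa [← Set.mem_range, range_orderEmbOfFin]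
      exact ⟨i, f.le_iff_le.mp hyj, rfl⟩
    · rintro ⟨i, hij, rfl⟩
      exact ⟨orderEmbOfFin_mem S rfl i, f.le_iff_le.mpr hij⟩
  rw [hle, card_map, Fin.card_Iic, Nat.add_sub_cancel, List.getD_eq_getElem]
  exact (orderEmbOfFin_apply S rfl j).symm

end Finset

namespace SortIdx

open Finset

variable {n : ℕ}

theorem leh_eq_card_filter_image_Iic (τ : Equiv.Perm (Fin n)) (i : Fin n) :
    Leh τ i = #{y ∈ (Iic i).image τ | y ≤ τ i} := by
  rw [Leh, filter_image, card_image_of_injective _ τ.injective]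
  congr 1
  ext j
  simp

theorem getD_sort_acode_sub_one (σ : Equiv.Perm (Fin n)) (i d : Fin n) :
    (((Iic i).image ⇑σ⁻¹).sort (· ≤ ·)).getD (Acode σ i - 1) d = σ⁻¹ i := by
  rw [Acode, leh_eq_card_filter_image_Iic]
  exact getD_sort_card_filter_le_sub_one (mem_image_of_mem _ (mem_Iic.mpr le_rfl)) d

theorem invSet_filter_apply_fst_eq (σ : Equiv.Perm (Fin n)) (i : Fin n) :
    {p ∈ InvSet σ | σ p.1 = i} =
      {j ∈ (Iic i).image ⇑σ⁻¹ | σ⁻¹ i < j}.image (σ⁻¹ i, ·) := by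
  ext ⟨p, q⟩
  simp only [InvSet, mem_filter, mem_univ, true_and, mem_image, mem_Iic, Prod.mk.injEq]
  constructor
  · rintro ⟨⟨hpq, hqp⟩, rfl⟩
    exact ⟨q, ⟨⟨σ q, hqp.le, by simp⟩, by simpa using hpq⟩, by simp, rfl⟩
  · rintro ⟨j, ⟨⟨k, hk, rfl⟩, hik⟩, rfl, rfl⟩
    refine ⟨⟨hik, ?_⟩, by simp⟩
    simpa using hk.lt_of_ne (by rintro rfl; exact hik.false)

theorem inducedAux_acode (σ : Equiv.Perm (Fin n)) (l : List (Fin n))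
    (hl : l.Pairwise (· > ·)) (hdown : ∀ a ∈ l, ∀ b ≤ a, b ∈ l) :
    inducedAux l (l.toFinset.image ⇑σ⁻¹) (Acode σ) = {p ∈ InvSet σ | σ p.1 ∈ l} := by
  induction l with
  | nil => simp [inducedAux]
  | cons i is ih =>
    obtain ⟨his_lt, his⟩ := List.pairwise_cons.mp hl
    have hIio : is.toFinset = Iio i := by
      ext b
      simp only [List.mem_toFinset, mem_Iio]
      refine ⟨his_lt b, fun hb => ?_⟩
      exact (List.mem_cons.mp (hdown i List.mem_cons_self b hb.le)).resolve_left hb.ne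
    have hIic : (i :: is).toFinset = Iic i := by
      rw [List.toFinset_cons, hIio, Iio_insert]
    have his_down : ∀ a ∈ is, ∀ b ≤ a, b ∈ is := fun a ha b hb =>
      (List.mem_cons.mp (hdown a (List.mem_cons_of_mem _ ha) b hb)).resolve_left
        (hb.trans_lt (his_lt a ha)).ne
    rw [inducedAux, hIic, getD_sort_acode_sub_one, ← image_erase σ⁻¹.injective, Iic_erase,
      ← hIio, ih his his_down, ← invSet_filter_apply_fst_eq, ← filter_or]
    simp

end SortIdx

/-- Proposition 2.4.  `Inv σ = ⟨A σ⟩`: the inversion set of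
`σ` is the induced set of its `A`-code. -/
theorem invSet_eq_induced_acode (n : ℕ) (σ : Equiv.Perm (Fin n)) :
    SortIdx.InvSet σ = SortIdx.induced (SortIdx.Acode σ) := by
  have hl : (List.finRange n).reverse.Pairwise (· > ·) :=
    List.pairwise_reverse.mpr (List.pairwise_lt_finRange n)
  have hdown : ∀ a ∈ (List.finRange n).reverse, ∀ b ≤ a, b ∈ (List.finRange n).reverse := by
    simp
  have huniv : ((List.finRange n).reverse.toFinset.image ⇑σ⁻¹) = Finset.univ := by
    simp
  rw [SortIdx.induced, ← huniv, SortIdx.inducedAux_acode σ _ hl hdown]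
  simp
end

section
/- In the group algebra ℤ[S_n], let η_1 := 1 and η_j := 1 + Σ_{1 ≤ i < j} (i j) for 2 ≤ j ≤ n, where (i j) denotes the transposition exchanging i and j. Then η_1 η_2 ⋯ η_n = Σ_{σ ∈ S_n} σ. -/
open scoped Classical

private lemma eta_key (n : ℕ) : ∀ k : ℕ, k ≤ n →
    ((((List.finRange n).take k).map (fun j : Fin n =>
        (1 : MonoidAlgebra ℤ (Equiv.Perm (Fin n))) +
          ∑ i ∈ Finset.univ.filter (fun i : Fin n => i < j),
            MonoidAlgebra.of ℤ (Equiv.Perm (Fin n)) (Equiv.swap i j))).prod) =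
      ∑ σ ∈ Finset.univ.filter
          (fun σ : Equiv.Perm (Fin n) => ∀ j : Fin n, k ≤ (j : ℕ) → σ j = j),
        MonoidAlgebra.of ℤ (Equiv.Perm (Fin n)) σ := by
  intro k
  induction k with
  | zero =>
    intro _
    have h1 : Finset.univ.filter
        (fun σ : Equiv.Perm (Fin n) => ∀ j : Fin n, 0 ≤ (j : ℕ) → σ j = j) = {1} := by
      ext σ
      simp [Equiv.ext_iff]
    simp only [List.take_zero, List.map_nil, List.prod_nil]
    rw [h1, Finset.sum_singleton, MonoidAlgebra.of_apply]
    rfl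
  | succ k ih =>
    intro hk1
    have hk : k < n := hk1
    set kf : Fin n := ⟨k, hk⟩ with hkf
    have hget : (List.finRange n)[k]? = some kf := by
      simp [List.getElem?_eq_getElem, hk, kf]
    rw [List.take_succ, hget, List.map_append, List.prod_append, ih (le_of_lt hk)]
    simp only [Option.toList_some, List.map_cons, List.map_nil, List.prod_cons,
      List.prod_nil, mul_one]
    set A : Finset (Equiv.Perm (Fin n)) := Finset.univ.filter
        (fun σ : Equiv.Perm (Fin n) => ∀ j : Fin n, k ≤ (j : ℕ) → σ j = j) with hA
    set B : Finset (Equiv.Perm (Fin n)) := Finset.univ.filter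
        (fun σ : Equiv.Perm (Fin n) => ∀ j : Fin n, k + 1 ≤ (j : ℕ) → σ j = j) with hB
    set I : Finset (Fin n) := Finset.univ.filter (fun i : Fin n => i < kf) with hI
    have hiI : ∀ i ∈ I, (i : ℕ) < k := by
      intro i hi
      simpa [hI, Fin.lt_def, kf] using hi
    have hAmem : ∀ σ ∈ A, ∀ j : Fin n, k ≤ (j : ℕ) → σ j = j := by
      intro σ hσ; simpa [hA] using hσ
    have hBmem : ∀ σ ∈ B, ∀ j : Fin n, k + 1 ≤ (j : ℕ) → σ j = j := by
      intro σ hσ; simpa [hB] using hσ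
    -- split B by whether σ kf = kf
    have hsplit : B.filter (fun σ => σ kf = kf) = A := by
      ext σ
      simp only [hA, hB, Finset.mem_filter, Finset.mem_univ, true_and]
      constructor
      · rintro ⟨h1, h2⟩ j hj
        rcases eq_or_lt_of_le hj with h | h
        · have : j = kf := by ext; simp [kf, ← h]
          rw [this]; exact h2
        · exact h1 j h
      · intro h
        exact ⟨fun j hj => h j (le_of_lt (Nat.lt_of_succ_le hj)),
          h kf (by simp [kf])⟩
    have hBdef : ∑ σ ∈ B, MonoidAlgebra.of ℤ (Equiv.Perm (Fin n)) σ =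
        ∑ σ ∈ A, MonoidAlgebra.of ℤ (Equiv.Perm (Fin n)) σ +
        ∑ σ ∈ B.filter (fun σ => ¬ σ kf = kf),
          MonoidAlgebra.of ℤ (Equiv.Perm (Fin n)) σ := by
      rw [← hsplit, Finset.sum_filter_add_sum_filter_not]
    have hmain : ∑ p ∈ A ×ˢ I,
        MonoidAlgebra.of ℤ (Equiv.Perm (Fin n)) (p.1 * Equiv.swap p.2 kf) =
        ∑ σ ∈ B.filter (fun σ => ¬ σ kf = kf),
          MonoidAlgebra.of ℤ (Equiv.Perm (Fin n)) σ := by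
      apply Finset.sum_bij'
        (i := fun p _ => p.1 * Equiv.swap p.2 kf)
        (j := fun τ _ => (τ * Equiv.swap (τ⁻¹ kf) kf, τ⁻¹ kf))
      · rintro ⟨σ, i⟩ hp
        rw [Finset.mem_product] at hp
        obtain ⟨hσ, hi⟩ := hp
        have hik : (i : ℕ) < k := hiI i hi
        have hink : i ≠ kf := by
          intro h; rw [h] at hik; simp [kf] at hik
        simp only [Finset.mem_filter, Finset.mem_univ, true_and, hB]
        constructor
        · intro j hj
          have hji : j ≠ i := by
            intro h; rw [h] at hj; omega
          have hjk : j ≠ kf := by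
            intro h; rw [h] at hj; simp [kf] at hj
          rw [Equiv.Perm.mul_apply, Equiv.swap_apply_of_ne_of_ne hji hjk]
          exact hAmem σ hσ j (by omega)
        · rw [Equiv.Perm.mul_apply, Equiv.swap_apply_right]
          intro h
          have h3 : i = σ⁻¹ kf := by rw [← h]; simp
          have hsk : σ kf = kf := hAmem σ hσ kf (by simp [kf])
          have h2 : σ⁻¹ kf = kf := by rw [Equiv.Perm.inv_eq_iff_eq, hsk]
          exact hink (h3.trans h2)
      · intro τ hτ
        rw [Finset.mem_filter] at hτ
        obtain ⟨hτB, hτk⟩ := hτ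
        set i : Fin n := τ⁻¹ kf with hi
        have hτi : τ i = kf := by simp [hi]
        have hik : i ≠ kf := by
          intro h; rw [h] at hτi; exact hτk hτi
        have hilt : (i : ℕ) < k := by
          by_contra h
          push_neg at h
          rcases eq_or_lt_of_le h with h' | h'
          · apply hik; ext; simp [kf, ← h']
          · have := hBmem τ hτB i h'
            rw [hτi] at this
            exact hik this.symm
        rw [Finset.mem_product]
        constructor
        · simp only [hA, Finset.mem_filter, Finset.mem_univ, true_and]
          intro j hj
          by_cases hjk : j = kf
          · rw [hjk, Equiv.Perm.mul_apply, Equiv.swap_apply_right, hτi]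
          · have hji : j ≠ i := by
              intro h; rw [h] at hj; omega
            have hjk1 : k + 1 ≤ (j : ℕ) := by
              rcases eq_or_lt_of_le hj with h' | h'
              · exact absurd (by ext; simp [kf, ← h'] : j = kf) hjk
              · exact h'
            rw [Equiv.Perm.mul_apply, Equiv.swap_apply_of_ne_of_ne hji hjk]
            exact hBmem τ hτB j hjk1
        · simp only [hI, Finset.mem_filter, Finset.mem_univ, true_and, Fin.lt_def]
          exact hilt
      · rintro ⟨σ, i⟩ hp
        rw [Finset.mem_product] at hp
        obtain ⟨hσ, hi⟩ := hp
        have hik : (i : ℕ) < k := hiI i hi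
        have hink : i ≠ kf := by
          intro h; rw [h] at hik; simp [kf] at hik
        have h1 : (σ * Equiv.swap i kf)⁻¹ kf = i := by
          rw [Equiv.Perm.inv_eq_iff_eq, Equiv.Perm.mul_apply, Equiv.swap_apply_left]
          exact (hAmem σ hσ kf (by simp [kf])).symm
        rw [h1]
        simp [mul_assoc, Equiv.swap_mul_self]
      · intro τ hτ
        simp [mul_assoc, Equiv.swap_mul_self]
      · rintro ⟨σ, i⟩ hp
        rfl
    rw [mul_add, mul_one, Finset.mul_sum, hBdef]
    congr 1
    rw [← hmain, Finset.sum_product, Finset.sum_comm]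
    apply Finset.sum_congr rfl
    intro i _
    rw [Finset.sum_mul]
    apply Finset.sum_congr rfl
    intro σ _
    rw [← map_mul]

/-- Petersen.  In the group algebra `ℤ[Sₙ]`, with
`η_j := 1 + ∑_{i<j} (i j)`, one has `η_1 η_2 ⋯ η_n = ∑_{σ ∈ Sₙ} σ`. -/
theorem eta_product_eq_sum_perms (n : ℕ) :
    (((List.finRange n).map (fun j : Fin n =>
        (1 : MonoidAlgebra ℤ (Equiv.Perm (Fin n))) +
          ∑ i ∈ Finset.univ.filter (fun i : Fin n => i < j),
            MonoidAlgebra.of ℤ (Equiv.Perm (Fin n)) (Equiv.swap i j))).prod) =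
      ∑ σ : Equiv.Perm (Fin n), MonoidAlgebra.of ℤ (Equiv.Perm (Fin n)) σ := by
  have h := eta_key n n le_rfl
  rw [List.take_of_length_le (by simp)] at h
  rw [h]
  apply Finset.sum_congr
  · ext σ
    simp only [Finset.mem_filter, Finset.mem_univ, true_and, iff_true]
    intro j hj
    exact absurd j.isLt (by omega)
  · intros; rfl
end

section
/- Let n ≥ 2, let σ ∈ S_n satisfy σ(n) = n, and let 1 ≤ i < n. Define σ' := σ∘(i n), i.e. σ'(i) = n, σ'(n) = σ(i), and σ'(x) = σ(x) for all x ∉ {i, n}. Then: (a) sor(σ') = sor(σ) + (n − i); (b) cyc(σ') = cyc(σ) − 1; (c) lmic1(σ') = lmic1(σ) + 1 if i = 1, and lmic1(σ') = lmic1(σ) if i > 1. -/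
open scoped Classical

/-!
`σ * swap i m` is `σ` with its fixed point `m` inserted into the cycle of `i`, right after `i`.
So the orbit of any `x ≠ m` only gains visits to `m`, and since `m` is the largest letter this
changes neither the cycle minima nor the `B`-code at `x ≠ m`, while `m` stops being a cycle
minimum and gets `B`-code `i`. The first sorting step of `σ * swap i m` is the transposition
`(i m)`, which costs `m - i` and leaves `σ`.
-/

namespace Equiv.Perm

variable {α : Type*} [DecidableEq α]

theorem card_support_mul_swap_inv_lt [Fintype α] {σ : Perm α} {j : α} (hj : j ∈ σ.support) :
    (σ * swap (σ⁻¹ j) j).support.card < σ.support.card := by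
  rw [mul_swap_eq_swap_mul, show σ (σ⁻¹ j) = j from σ.apply_symm_apply j]
  exact card_support_swap_mul (mem_support.mp hj)

theorem mul_swap_apply_eq_or {τ : Perm α} {a m z : α} (hτ : τ m = m) (hz : z ≠ m) :
    (τ * swap a m) z = τ z ∨ ((τ * swap a m) z = m ∧ (τ * swap a m) m = τ z) := by
  by_cases hza : z = a
  · subst hza
    simp [hτ]
  · simp [swap_apply_of_ne_of_ne hza hz]

/-- The `τ`-trajectory of `x ≠ m` is the `(τ * swap a m)`-trajectory with the visits to `m`
deleted. -/
theorem exists_pow_mul_swap_apply_eq {τ : Perm α} {a m x : α} (hτ : τ m = m) (hx : x ≠ m)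
    (k : ℕ) :
    ∃ j, k ≤ j ∧ (0 < j → 0 < k) ∧ ((τ * swap a m) ^ j) x = (τ ^ k) x ∧
      ∀ l, 0 < l → l < j → ((τ * swap a m) ^ l) x = m ∨
        ∃ l', 0 < l' ∧ l' < k ∧ ((τ * swap a m) ^ l) x = (τ ^ l') x := by
  induction k with
  | zero => exact ⟨0, le_rfl, id, rfl, fun l hl₀ hl => absurd hl (by omega)⟩
  | succ k ih =>
    obtain ⟨j, hkj, hpos, hj, hprev⟩ := ih
    have hy : (τ ^ k) x ≠ m := fun h =>
      hx ((τ ^ k).injective (h.trans (pow_apply_eq_self_of_apply_eq_self hτ k).symm))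
    have hprev' : ∀ l, 0 < l → l < j + 1 → ((τ * swap a m) ^ l) x = m ∨
        ∃ l', 0 < l' ∧ l' < k + 1 ∧ ((τ * swap a m) ^ l) x = (τ ^ l') x := by
      intro l hl₀ hl
      rcases Nat.lt_or_ge l j with hlj | hlj
      · rcases hprev l hl₀ hlj with h | ⟨l', hl'₀, hl', h⟩
        exacts [Or.inl h, Or.inr ⟨l', hl'₀, by omega, h⟩]
      · obtain rfl : l = j := by omega
        exact Or.inr ⟨k, hpos hl₀, by omega, hj⟩
    have hstep : ((τ * swap a m) ^ (j + 1)) x = (τ * swap a m) ((τ ^ k) x) := by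
      rw [pow_succ', mul_apply, hj]
    rcases mul_swap_apply_eq_or (a := a) hτ hy with h | ⟨hm, hm'⟩
    · refine ⟨j + 1, by omega, fun _ => k.succ_pos, ?_, hprev'⟩
      rw [hstep, h, pow_succ', mul_apply]
    · refine ⟨j + 2, by omega, fun _ => k.succ_pos, ?_, fun l hl₀ hl => ?_⟩
      · rw [pow_succ', mul_apply, hstep, hm, hm', pow_succ', mul_apply]
      · rcases Nat.lt_or_ge l (j + 1) with hlj | hlj
        · exact hprev' l hl₀ hlj
        · obtain rfl : l = j + 1 := by omega
          exact Or.inl (hstep.trans hm)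

theorem mul_swap_inv_of_apply_eq_self {σ : Perm α} {i m : α} (hσ : σ m = m) :
    (σ * swap i m)⁻¹ = σ⁻¹ * swap (σ i) m := by
  rw [mul_inv_rev, swap_inv, swap_mul_eq_mul_swap, inv_inv, hσ]

end Equiv.Perm

namespace SortIdx

open Equiv Equiv.Perm

variable {n : ℕ}

theorem sorAux_succ_of_card_support_le (fuel : ℕ) (σ : Perm (Fin n))
    (h : σ.support.card ≤ fuel) : sorAux (fuel + 1) σ = sorAux fuel σ := by
  induction fuel generalizing σ with
  | zero =>
    have hσ : ¬σ.support.Nonempty := by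
      rw [Finset.not_nonempty_iff_eq_empty, ← Finset.card_eq_zero]
      omega
    rw [sorAux.eq_2, dif_neg hσ, sorAux.eq_1]
  | succ fuel ih =>
    by_cases hσ : σ.support.Nonempty
    · rw [sorAux.eq_2 σ (fuel + 1), dif_pos hσ, sorAux.eq_2 σ fuel, dif_pos hσ, ih]
      have := card_support_mul_swap_inv_lt (σ.support.max'_mem hσ)
      omega
    · rw [sorAux.eq_2 σ (fuel + 1), dif_neg hσ, sorAux.eq_2 σ fuel, dif_neg hσ]

variable {σ : Perm (Fin n)} {i m x : Fin n}

theorem sor_mul_swap (hm : IsTop m) (hσ : σ m = m) (hi : i ≠ m) :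
    sor (σ * swap i m) = sor σ + ((m : ℕ) - i) := by
  obtain ⟨n, rfl⟩ : ∃ n', n = n' + 1 := Nat.exists_eq_add_one.mpr m.pos
  have hm_mem : m ∈ (σ * swap i m).support := by
    simpa [hσ] using fun h => hi (σ.injective (h.trans hσ.symm))
  have hne : (σ * swap i m).support.Nonempty := ⟨m, hm_mem⟩
  have hmax : (σ * swap i m).support.max' hne = m :=
    le_antisymm (hm _) ((σ * swap i m).support.le_max' m hm_mem)
  have hinv : (σ * swap i m)⁻¹ m = i := by
    rw [inv_eq_iff_eq, mul_apply, swap_apply_left, hσ]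
  have hcard : σ.support.card ≤ n := by
    have : σ.support ⊆ Finset.univ.erase m := fun x hx =>
      Finset.mem_erase.mpr ⟨fun h => mem_support.mp hx (h ▸ hσ), Finset.mem_univ x⟩
    simpa using Finset.card_le_card this
  rw [sor, sor, sorAux.eq_2, dif_pos hne, hmax, hinv, mul_swap_mul_self,
    ← sorAux_succ_of_card_support_le n σ hcard]
  omega

theorem mem_cycSet_mul_swap_iff_of_ne (hm : IsTop m) (hσ : σ m = m) (hx : x ≠ m) :
    x ∈ CycSet (σ * swap i m) ↔ x ∈ CycSet σ := by
  simp only [CycSet, Finset.mem_filter, Finset.mem_univ, true_and]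
  constructor
  · intro hx' k
    obtain ⟨j, -, -, hj, -⟩ := exists_pow_mul_swap_apply_eq (a := i) hσ hx k
    exact hj ▸ hx' j
  · intro hx' l
    obtain ⟨j, hj, -, -, hprev⟩ := exists_pow_mul_swap_apply_eq (a := i) hσ hx (l + 1)
    rcases l.eq_zero_or_pos with rfl | hl₀
    · exact le_rfl
    rcases hprev l hl₀ (by omega) with h | ⟨l', -, -, h⟩
    · rw [h]; exact hm x
    · rw [h]; exact hx' l'

theorem cycSet_mul_swap (hm : IsTop m) (hσ : σ m = m) (hi : i ≠ m) :
    CycSet (σ * swap i m) = (CycSet σ).erase m := by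
  ext x
  rw [Finset.mem_erase]
  by_cases hx : x = m
  · subst hx
    simp only [ne_eq, not_true_eq_false, false_and, iff_false, CycSet, Finset.mem_filter,
      Finset.mem_univ, true_and, not_forall, not_le]
    refine ⟨1, lt_of_le_of_ne (hm _) ?_⟩
    simpa using fun h => hi (σ.injective (h.trans hσ.symm))
  · rw [mem_cycSet_mul_swap_iff_of_ne hm hσ hx]
    exact ⟨fun h => ⟨hx, h⟩, And.right⟩

theorem cyc_mul_swap_add_one (hm : IsTop m) (hσ : σ m = m) (hi : i ≠ m) :
    cyc (σ * swap i m) + 1 = cyc σ := by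
  have hm_mem : m ∈ CycSet σ := by
    simp [CycSet, pow_apply_eq_self_of_apply_eq_self hσ]
  rw [cyc, cyc, cycSet_mul_swap hm hσ hi, Finset.card_erase_add_one hm_mem]

theorem bcode_eq_pow_apply {k : ℕ} (hk : 0 < k) (hle : (σ⁻¹ ^ k) x ≤ x)
    (hmin : ∀ l, 0 < l → l < k → x < (σ⁻¹ ^ l) x) : Bcode σ x = (σ⁻¹ ^ k) x := by
  have : Nat.find (bcode_exists σ x) = k :=
    (Nat.find_eq_iff _).mpr ⟨⟨hk, hle⟩, fun l hl h => (hmin l h.1 hl).not_ge h.2⟩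
  rw [Bcode, this]

theorem bcode_of_apply_eq_self (hσ : σ x = x) : Bcode σ x = x := by
  have hinv : σ⁻¹ x = x := inv_eq_iff_eq.mpr hσ.symm
  rw [bcode_eq_pow_apply one_pos (by rw [pow_one, hinv]) (fun l h₀ h₁ => by omega), pow_one,
    hinv]

theorem bcode_mul_swap_self (hm : IsTop m) (hσ : σ m = m) : Bcode (σ * swap i m) m = i := by
  have hinv : (σ * swap i m)⁻¹ m = i := by
    rw [inv_eq_iff_eq, mul_apply, swap_apply_left, hσ]
  rw [bcode_eq_pow_apply one_pos (by rw [pow_one, hinv]; exact hm i) (fun l h₀ h₁ => by omega),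
    pow_one, hinv]

theorem bcode_mul_swap_of_ne (hm : IsTop m) (hσ : σ m = m) (hx : x ≠ m) :
    Bcode (σ * swap i m) x = Bcode σ x := by
  obtain ⟨hk, hle⟩ := Nat.find_spec (bcode_exists σ x)
  have hmin : ∀ l, 0 < l → l < Nat.find (bcode_exists σ x) → x < (σ⁻¹ ^ l) x :=
    fun l hl₀ hl => not_le.mp fun h => Nat.find_min (bcode_exists σ x) hl ⟨hl₀, h⟩
  have hσinv : σ⁻¹ m = m := inv_eq_iff_eq.mpr hσ.symm
  obtain ⟨j, hkj, -, hj, hprev⟩ :=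
    exists_pow_mul_swap_apply_eq (a := σ i) hσinv hx (Nat.find (bcode_exists σ x))
  rw [← mul_swap_inv_of_apply_eq_self hσ] at hj hprev
  rw [bcode_eq_pow_apply (lt_of_lt_of_le hk hkj) (hj ▸ hle), hj, Bcode]
  intro l hl₀ hl
  rcases hprev l hl₀ hl with h | ⟨l', hl'₀, hl', h⟩
  · rw [h]; exact lt_of_le_of_ne (hm x) hx
  · rw [h]; exact hmin l' hl'₀ hl'

theorem mem_lmic1Set : x ∈ Lmic1Set σ ↔ (Bcode σ x : ℕ) = 0 := by
  simp [Lmic1Set, Oset, BcodeNat]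

theorem lmic1Set_mul_swap_of_val_eq_zero (hm : IsTop m) (hσ : σ m = m) (hi : (i : ℕ) = 0) :
    Lmic1Set (σ * swap i m) = insert m (Lmic1Set σ) := by
  ext x
  rw [Finset.mem_insert, mem_lmic1Set, mem_lmic1Set]
  by_cases hx : x = m
  · simp [hx, bcode_mul_swap_self hm hσ, hi]
  · simp [hx, bcode_mul_swap_of_ne hm hσ hx]

theorem lmic1Set_mul_swap_of_val_ne_zero (hm : IsTop m) (hσ : σ m = m) (hi : (i : ℕ) ≠ 0) :
    Lmic1Set (σ * swap i m) = Lmic1Set σ := by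
  ext x
  rw [mem_lmic1Set, mem_lmic1Set]
  by_cases hx : x = m
  · subst hx
    have : (i : ℕ) ≤ x := hm i
    rw [bcode_mul_swap_self hm hσ, bcode_of_apply_eq_self hσ]
    omega
  · rw [bcode_mul_swap_of_ne hm hσ hx]

theorem lmic1_mul_swap_of_val_eq_zero (hm : IsTop m) (hσ : σ m = m) (hi : i ≠ m)
    (hi₀ : (i : ℕ) = 0) : lmic1 (σ * swap i m) = lmic1 σ + 1 := by
  have hm_not_mem : m ∉ Lmic1Set σ := by
    rw [mem_lmic1Set, bcode_of_apply_eq_self hσ]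
    exact fun h => hi (Fin.ext (hi₀.trans h.symm))
  rw [lmic1, lmic1, lmic1Set_mul_swap_of_val_eq_zero hm hσ hi₀,
    Finset.card_insert_of_notMem hm_not_mem]

end SortIdx

/-- For `σ ∈ Sₙ` fixing the largest letter `n` and
`1 ≤ i < n` (here `0`-indexed: `i < n-1` and the largest letter is `⟨n-1,_⟩`),
let `σ' = σ ∘ (i n)`.  Then `sor σ' = sor σ + (n - i)`,
`cyc σ' = cyc σ - 1`, and `lmic₁ σ' = lmic₁ σ + 1` if `i = 1` while
`lmic₁ σ' = lmic₁ σ` if `i > 1`. -/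
theorem sor_cyc_lmic1_of_mul_swap (n : ℕ) (hn : 2 ≤ n) (σ : Equiv.Perm (Fin n)) (i : Fin n)
    (hσ : σ ⟨n - 1, by omega⟩ = ⟨n - 1, by omega⟩) (hi : (i : ℕ) < n - 1) :
    SortIdx.sor (σ * Equiv.swap i ⟨n - 1, by omega⟩) = SortIdx.sor σ + (n - 1 - (i : ℕ)) ∧
    SortIdx.cyc (σ * Equiv.swap i ⟨n - 1, by omega⟩) + 1 = SortIdx.cyc σ ∧
    ((i : ℕ) = 0 →
      SortIdx.lmic1 (σ * Equiv.swap i ⟨n - 1, by omega⟩) = SortIdx.lmic1 σ + 1) ∧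
    ((i : ℕ) ≠ 0 →
      SortIdx.lmic1 (σ * Equiv.swap i ⟨n - 1, by omega⟩) = SortIdx.lmic1 σ) := by
  have hm : IsTop (⟨n - 1, by omega⟩ : Fin n) := fun x =>
    Fin.le_def.mpr (Nat.le_sub_one_of_lt x.isLt)
  have him : i ≠ ⟨n - 1, by omega⟩ := fun h => by simp [h] at hi
  exact ⟨SortIdx.sor_mul_swap hm hσ him, SortIdx.cyc_mul_swap_add_one hm hσ him,
    SortIdx.lmic1_mul_swap_of_val_eq_zero hm hσ him,
    fun hi₀ => congrArg Finset.card (SortIdx.lmic1Set_mul_swap_of_val_ne_zero hm hσ hi₀)⟩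
end
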